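/- Let θ̂ be a Gaussian random variable with variance v = eᵀΣe > 0, and let Γ = 4·√( λ / log(1 + λ/σ²) · log(2K/δ) ) where λ ≥ v and K ≥ 1. Then P( |θ̂ − E[θ̂]| ≥ (Γ/2)·√( (1/2)·log(1 + v/σ²) ) ) ≤ δ/K. -/

import Mathlib

open MeasureTheory ProbabilityTheory Real
open scoped NNReal ENNReal

lemma exp_mul_gaussianPDFReal (m : ℝ) {v : ℝ≥0} (hv : v ≠ 0) (t x : ℝ) :
    Real.exp (t * x) * gaussianPDFReal m v x
      = Real.exp (m * t + v * t ^ 2 / 2) * gaussianPDFReal (m + v * t) v x := by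
  have hv' : (0:ℝ) < v := lt_of_le_of_ne v.coe_nonneg (by exact_mod_cast (Ne.symm hv))
  unfold gaussianPDFReal
  rw [mul_left_comm, mul_left_comm (Real.exp _), ← Real.exp_add, ← Real.exp_add]
  congr 1
  field_simp
  ring

lemma integrable_exp_mul_gaussianPDFReal (m : ℝ) {v : ℝ≥0} (hv : v ≠ 0) (t : ℝ) :
    Integrable (fun x => Real.exp (t * x) * gaussianPDFReal m v x) := by
  simp_rw [exp_mul_gaussianPDFReal m hv t]
  exact (integrable_gaussianPDFReal (m + v * t) v).const_mul _

lemma integral_exp_mul_gaussianPDFReal (m : ℝ) {v : ℝ≥0} (hv : v ≠ 0) (t : ℝ) :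
    ∫ x, Real.exp (t * x) * gaussianPDFReal m v x
      = Real.exp (m * t + v * t ^ 2 / 2) := by
  simp_rw [exp_mul_gaussianPDFReal m hv t]
  rw [integral_const_mul, integral_gaussianPDFReal_eq_one _ hv, mul_one]

lemma gaussianReal_eq_withDensity (m : ℝ) {v : ℝ≥0} (hv : v ≠ 0) :
    gaussianReal m v
      = volume.withDensity (fun x => ((gaussianPDFReal m v x).toNNReal : ℝ≥0∞)) := by
  rw [gaussianReal_of_var_ne_zero m hv]
  rfl

lemma integral_fun_gaussianReal (m : ℝ) {v : ℝ≥0} (hv : v ≠ 0) (g : ℝ → ℝ) :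
    ∫ x, g x ∂(gaussianReal m v) = ∫ x, gaussianPDFReal m v x * g x := by
  rw [gaussianReal_eq_withDensity m hv,
    integral_withDensity_eq_integral_smul
      ((measurable_gaussianPDFReal m v).real_toNNReal) g]
  congr 1 with x
  simp [NNReal.smul_def, Real.coe_toNNReal _ (gaussianPDFReal_nonneg m v x)]

lemma integrable_exp_mul_id_gaussianReal (m : ℝ) {v : ℝ≥0} (hv : v ≠ 0) (t : ℝ) :
    Integrable (fun x => Real.exp (t * x)) (gaussianReal m v) := by
  rw [gaussianReal_eq_withDensity m hv,
    integrable_withDensity_iff ((measurable_gaussianPDFReal m v).real_toNNReal.coe_nnreal_ennreal)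
      (ae_of_all _ fun x => ENNReal.coe_lt_top)]
  refine (integrable_exp_mul_gaussianPDFReal m hv t).congr ?_
  filter_upwards with x
  simp [Real.coe_toNNReal _ (gaussianPDFReal_nonneg m v x)]

lemma mgf_id_gaussianReal (m : ℝ) {v : ℝ≥0} (hv : v ≠ 0) (t : ℝ) :
    mgf id (gaussianReal m v) t = Real.exp (m * t + v * t ^ 2 / 2) := by
  rw [mgf, integral_fun_gaussianReal m hv]
  rw [← integral_exp_mul_gaussianPDFReal m hv t]
  congr 1 with x
  simp [mul_comm]

lemma log_one_add_ratio {a b : ℝ} (ha : 0 < a) (hab : a ≤ b) :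
    a * Real.log (1 + b) ≤ b * Real.log (1 + a) := by
  have hb : 0 < b := ha.trans_le hab
  have h := strictConcaveOn_log_Ioi.concaveOn.2 (Set.mem_Ioi.mpr one_pos)
    (Set.mem_Ioi.mpr (by linarith : (0:ℝ) < 1 + b))
    (sub_nonneg.mpr ((div_le_one hb).mpr hab))
    (by positivity : (0:ℝ) ≤ a / b) (by ring)
  have hxy : (1 - a/b) • (1:ℝ) + (a/b) • (1+b) = 1 + a := by
    rw [smul_eq_mul, smul_eq_mul, mul_one, mul_add, mul_one, div_mul_cancel₀ _ hb.ne']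
    ring
  rw [hxy, Real.log_one, smul_zero, zero_add, smul_eq_mul] at h
  have := mul_le_mul_of_nonneg_left h hb.le
  rw [← mul_assoc, mul_div_cancel₀ _ hb.ne'] at this
  linarith

lemma gaussian_tail_bound (m : ℝ) {v : ℝ≥0} (hv : v ≠ 0) {ε : ℝ} (hε : 0 ≤ ε) :
    gaussianReal m v {x | ε ≤ |x - m|}
      ≤ ENNReal.ofReal (2 * Real.exp (-ε ^ 2 / (2 * (v : ℝ)))) := by
  have hv' : (0:ℝ) < v := lt_of_le_of_ne v.coe_nonneg (by exact_mod_cast hv.symm)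
  set μ := gaussianReal m v
  have hsub : {x : ℝ | ε ≤ |x - m|} ⊆ {x : ℝ | m + ε ≤ x} ∪ {x : ℝ | x ≤ m - ε} := by
    intro x hx
    simp only [Set.mem_setOf_eq] at hx
    rcases le_abs.mp hx with h | h
    · exact Or.inl (by simp only [Set.mem_setOf_eq]; linarith)
    · exact Or.inr (by simp only [Set.mem_setOf_eq]; linarith)
  have hup : (μ {x : ℝ | m + ε ≤ x}).toReal ≤ Real.exp (-ε ^ 2 / (2 * (v:ℝ))) := by
    have h := measure_ge_le_exp_mul_mgf (X := id) (μ := μ) (t := ε / v) (m + ε)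
      (by positivity) (integrable_exp_mul_id_gaussianReal m hv _)
    simp only [id] at h
    rw [mgf_id_gaussianReal m hv, ← Real.exp_add] at h
    refine h.trans_eq ?_
    congr 1
    field_simp
    ring
  have hlo : (μ {x : ℝ | x ≤ m - ε}).toReal ≤ Real.exp (-ε ^ 2 / (2 * (v:ℝ))) := by
    have h := measure_le_le_exp_mul_mgf (X := id) (μ := μ) (t := -(ε / v)) (m - ε)
      (neg_nonpos.mpr (by positivity)) (integrable_exp_mul_id_gaussianReal m hv _)
    simp only [id] at h
    rw [mgf_id_gaussianReal m hv, ← Real.exp_add] at h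
    refine h.trans_eq ?_
    congr 1
    field_simp
    ring
  calc μ {x : ℝ | ε ≤ |x - m|}
      ≤ μ ({x : ℝ | m + ε ≤ x} ∪ {x : ℝ | x ≤ m - ε}) := measure_mono hsub
    _ ≤ μ {x : ℝ | m + ε ≤ x} + μ {x : ℝ | x ≤ m - ε} := measure_union_le _ _
    _ ≤ ENNReal.ofReal (Real.exp (-ε ^ 2 / (2 * (v:ℝ))))
        + ENNReal.ofReal (Real.exp (-ε ^ 2 / (2 * (v:ℝ)))) := by
        gcongr
        · rw [← ENNReal.ofReal_toReal (measure_ne_top μ _)]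
          exact ENNReal.ofReal_le_ofReal hup
        · rw [← ENNReal.ofReal_toReal (measure_ne_top μ _)]
          exact ENNReal.ofReal_le_ofReal hlo
    _ = ENNReal.ofReal (2 * Real.exp (-ε ^ 2 / (2 * (v:ℝ)))) := by
        rw [← ENNReal.ofReal_add (Real.exp_pos _).le (Real.exp_pos _).le]
        ring_nf

/-- Chernoff-type confidence bound for a Gaussian `θ̂ ~ N(m, v)` with `0 < v ≤ λ`:
with `Γ = 4·√(λ / log(1 + λ/σ²) · log(2K/δ))`,
`P(|θ̂ − m| ≥ (Γ/2)·√((1/2)·log(1 + v/σ²))) ≤ δ/K`. -/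
theorem gaussian_ucb_tail (m : ℝ) (v : ℝ≥0) (hv : 0 < v) (σsq lam δ : ℝ) (K : ℕ)
    (hσ : 0 < σsq) (hδ0 : 0 < δ) (hδ1 : δ < 1) (hK : 1 ≤ K) (hlam : (v : ℝ) ≤ lam) :
    gaussianReal m v
      {x : ℝ | 4 * Real.sqrt (lam / Real.log (1 + lam / σsq) * Real.log (2 * K / δ)) / 2 *
          Real.sqrt (1 / 2 * Real.log (1 + (v : ℝ) / σsq)) ≤ |x - m|} ≤
      ENNReal.ofReal (δ / K) := by
  have hv' : (0:ℝ) < v := hv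
  have hlam' : (0:ℝ) < lam := hv'.trans_le hlam
  have hK' : (1:ℝ) ≤ K := by exact_mod_cast hK
  have hKpos : (0:ℝ) < K := by linarith
  set Lg := Real.log (1 + lam / σsq) with hLg
  set Lv := Real.log (1 + (v:ℝ) / σsq) with hLv
  set L := Real.log (2 * K / δ) with hL
  have hLvpos : 0 < Lv := Real.log_pos (by rw [lt_add_iff_pos_right]; positivity)
  have hLgpos : 0 < Lg := Real.log_pos (by rw [lt_add_iff_pos_right]; positivity)
  have hLpos : 0 < L := Real.log_pos (by rw [lt_div_iff₀ hδ0]; linarith)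
  set ε := 4 * Real.sqrt (lam / Lg * L) / 2 * Real.sqrt (1 / 2 * Lv) with hε
  have hε0 : 0 ≤ ε := by positivity
  refine (gaussian_tail_bound m hv.ne' hε0).trans (ENNReal.ofReal_le_ofReal ?_)
  have hε2 : ε ^ 2 = 2 * (lam / Lg) * L * Lv := by
    rw [hε, mul_pow, div_pow, mul_pow,
      Real.sq_sqrt (by positivity : (0:ℝ) ≤ lam / Lg * L),
      Real.sq_sqrt (by positivity : (0:ℝ) ≤ 1 / 2 * Lv)]
    ring
  have hmono : (v:ℝ) * Lg ≤ lam * Lv := by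
    have h := log_one_add_ratio (a := (v:ℝ)/σsq) (b := lam/σsq) (by positivity)
      (by gcongr)
    rw [div_mul_eq_mul_div, div_mul_eq_mul_div, div_le_div_iff₀ hσ hσ] at h
    exact le_of_mul_le_mul_right h hσ
  have hexp : L ≤ ε ^ 2 / (2 * (v:ℝ)) := by
    rw [hε2, le_div_iff₀ (by positivity)]
    have h2 : (v:ℝ) ≤ lam / Lg * Lv := by
      rw [div_mul_eq_mul_div, le_div_iff₀ hLgpos]
      linarith
    nlinarith
  have hexpL : Real.exp (-L) = δ / (2 * K) := by
    rw [Real.exp_neg, hL, Real.exp_log (by positivity)]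
    field_simp
  calc 2 * Real.exp (-ε ^ 2 / (2 * (v:ℝ)))
      ≤ 2 * Real.exp (-L) := by
        gcongr
        rw [neg_div]
        exact neg_le_neg hexp
    _ = δ / K := by rw [hexpL]; field_simp
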